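/- arXiv:0807.2707 — 8 statements merged into one kernel-verified Lean document; each statement's English description precedes it below -/
import Mathlib

section
/- No latin trade can be embedded in a torsion-free abelian group. Precisely: if G is a torsion-free abelian group (written additively) and W is a finite nonempty set of triples (r,c,s) with r + c = s such that W is a latin trade (i.e., W admits a disjoint mate B making (W,B) a latin bitrade), then a contradiction follows; equivalently, any finite partial latin square embedded in a torsion-free finitely generated abelian group that forms a connected latin trade must be empty. -/
/-!
A finitely generated torsion-free abelian group is free, so the subgroup generated by the entries
of `W` embeds in `ℤ^k` with its lexicographic order. In a linearly ordered group pick the entry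
`(r, c, s)` of `W` with the largest symbol and, among those, the largest row. The entry of `B` in
row `r` with symbol `s` sits in a column `c'`; row `r` of `W` meets column `c'` in a symbol
`s' < s`, so `c' < c`, and column `c'` of `W` holds `s` in a row `r'` with `r' + c' = r + c`,
so `r' > r`, contradicting the choice of `(r, c, s)`.
-/

/-- `P` is a partial latin square: any two of the three coordinates determine the triple. -/
def IsPLS {R C S : Type*} (P : Set (R × C × S)) : Prop :=
  ∀ t₁ ∈ P, ∀ t₂ ∈ P,
    ((t₁ : R × C × S).1 = t₂.1 ∧ t₁.2.1 = t₂.2.1 → t₁ = t₂) ∧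
    (t₁.1 = t₂.1 ∧ t₁.2.2 = t₂.2.2 → t₁ = t₂) ∧
    (t₁.2.1 = t₂.2.1 ∧ t₁.2.2 = t₂.2.2 → t₁ = t₂)

/-- The defining condition of a latin bitrade: for each `(r,c,s) ∈ W` there are unique
`r' ≠ r`, `c' ≠ c`, `s' ≠ s` with `(r',c,s), (r,c',s), (r,c,s') ∈ B`. -/
def BitradeCond {R C S : Type*} (W B : Set (R × C × S)) : Prop :=
  ∀ t ∈ W,
    (∃! r', r' ≠ (t : R × C × S).1 ∧ (r', t.2.1, t.2.2) ∈ B) ∧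
    (∃! c', c' ≠ t.2.1 ∧ (t.1, c', t.2.2) ∈ B) ∧
    (∃! s', s' ≠ t.2.2 ∧ (t.1, t.2.1, s') ∈ B)

/-- `(W,B)` is a latin bitrade. -/
def IsLatinBitrade {R C S : Type*} (W B : Set (R × C × S)) : Prop :=
  W.Nonempty ∧ B.Nonempty ∧ Disjoint W B ∧ IsPLS W ∧ IsPLS B ∧
    BitradeCond W B ∧ BitradeCond B W

open Function Set

/-- What a bitrade `(W, B)` says about `W` alone: `col` is the column of the entry of `B` in row
`t.1` with symbol `t.2.2`. -/
def HasColumnPartners {R C S : Type*} (W : Set (R × C × S)) : Prop :=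
  ∀ t ∈ W, ∃ col row sym, (row, col, t.2.2) ∈ W ∧ (t.1, col, sym) ∈ W ∧ sym ≠ t.2.2

theorem BitradeCond.hasColumnPartners {R C S : Type*} {W B : Set (R × C × S)}
    (hWB : BitradeCond W B) (hBW : BitradeCond B W) : HasColumnPartners W := by
  intro t ht
  obtain ⟨-, ⟨col, ⟨-, hB⟩, -⟩, -⟩ := hWB t ht
  obtain ⟨⟨row, ⟨-, hrow⟩, -⟩, -, ⟨sym, ⟨hsym, hsymW⟩, -⟩⟩ := hBW _ hB
  exact ⟨col, row, sym, hrow, hsymW, hsym⟩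

theorem HasColumnPartners.preimage {α β : Type*} {W : Set (β × β × β)}
    (hW : HasColumnPartners W) {f : α → β} (hrange : W ⊆ range f ×ˢ range f ×ˢ range f) :
    HasColumnPartners (Prod.map f (Prod.map f f) ⁻¹' W) := by
  rintro ⟨r, c, s⟩ ht
  obtain ⟨col, row, sym, hrowW, hsymW, hne⟩ := hW _ ht
  obtain ⟨⟨row, rfl⟩, ⟨col, rfl⟩, -⟩ := hrange hrowW
  obtain ⟨-, -, ⟨sym, rfl⟩⟩ := hrange hsymW
  exact ⟨col, row, sym, hrowW, hsymW, fun h => hne (congrArg f h)⟩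

theorem HasColumnPartners.false_of_injective {G L : Type*} [AddCommMonoid G] [AddCommMonoid L]
    [LinearOrder L] [IsOrderedCancelAddMonoid L] {W : Set (G × G × G)} (hW : HasColumnPartners W)
    (hfin : W.Finite) (hne : W.Nonempty) (hemb : ∀ t ∈ W, t.1 + t.2.1 = t.2.2)
    (ψ : G →+ L) (hψ : Injective ψ) : False := by
  obtain ⟨⟨r, c, s⟩, ht, hmax⟩ :=
    W.exists_max_image (fun t => toLex (ψ t.2.2, ψ t.1)) hfin hne
  obtain ⟨col, row, sym, hrowW, hsymW, hsym⟩ := hW _ ht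
  have hrcs : ψ r + ψ c = ψ s := by rw [← map_add, hemb _ ht]
  have hsym_lt : ψ sym < ψ s := by
    rcases Prod.Lex.toLex_le_toLex.1 (hmax _ hsymW) with h | ⟨h, -⟩
    · exact h
    · exact absurd (hψ h) hsym
  have hcol_lt : ψ col < ψ c := by
    refine lt_of_add_lt_add_left (a := ψ r) ?_
    rwa [← map_add, hemb _ hsymW, hrcs]
  have hrow_gt : ψ r < ψ row := by
    refine lt_of_not_ge fun hle => (add_lt_add_of_le_of_lt hle hcol_lt).ne ?_
    rw [← map_add, hemb _ hrowW, hrcs]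
  rcases Prod.Lex.toLex_le_toLex.1 (hmax _ hrowW) with h | ⟨-, h⟩
  · exact lt_irrefl _ h
  · exact h.not_gt hrow_gt

theorem exists_addEquiv_lex (M : Type*) [AddCommGroup M] [Module.Finite ℤ M]
    [Module.IsTorsionFree ℤ M] : ∃ k : ℕ, Nonempty (M ≃+ Lex (Fin k → ℤ)) :=
  ⟨_, ⟨(Module.finBasis ℤ M).equivFun.toAddEquiv.trans (toLexAddEquiv _)⟩⟩

theorem isAddTorsionFree_of_nsmul_ne_zero {G : Type*} [AddCommGroup G]
    (htf : ∀ g : G, g ≠ 0 → ∀ n : ℕ, 0 < n → n • g ≠ 0) : IsAddTorsionFree G where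
  nsmul_right_injective n hn a b hab := by
    by_contra h
    refine htf (a - b) (sub_ne_zero.2 h) n (Nat.pos_of_ne_zero hn) ?_
    rwa [nsmul_sub, sub_eq_zero]

/-- No latin trade can be embedded in a torsion-free abelian group: if `G` is a torsion-free
abelian group and `W` is a finite nonempty set of triples `(r,c,s)` of elements of `G` with
`r + c = s` which admits a disjoint mate `B` making `(W,B)` a latin bitrade, then we get a
contradiction. -/
theorem stmt5 {G : Type*} [AddCommGroup G]
    (htf : ∀ g : G, g ≠ 0 → ∀ n : ℕ, 0 < n → n • g ≠ 0)
    (W : Set (G × G × G)) (hfin : W.Finite) (hne : W.Nonempty)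
    (hemb : ∀ t ∈ W, (t : G × G × G).1 + t.2.1 = t.2.2)
    (htrade : ∃ B : Set (G × G × G), IsLatinBitrade W B) :
    False := by
  obtain ⟨B, -, -, -, -, -, hWB, hBW⟩ := htrade
  have := isAddTorsionFree_of_nsmul_ne_zero htf
  let H := Submodule.span ℤ (⋃ t ∈ W, {t.1, t.2.1, t.2.2})
  have : Module.Finite ℤ H := .span_of_finite ℤ (hfin.biUnion fun _ _ => toFinite _)
  obtain ⟨k, ⟨ψ⟩⟩ := exists_addEquiv_lex H
  let f : H → G := Subtype.val
  have hrange : W ⊆ range f ×ˢ range f ×ˢ range f := by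
    intro t ht
    simp only [f, Subtype.range_coe_subtype, SetLike.setOfPred_mem_eq, mem_prod]
    refine ⟨?_, ?_, ?_⟩ <;> exact Submodule.subset_span (mem_biUnion ht (by simp))
  have hinj : Injective (Prod.map f (Prod.map f f)) :=
    Subtype.val_injective.prodMap (Subtype.val_injective.prodMap Subtype.val_injective)
  exact ((hWB.hasColumnPartners hBW).preimage hrange).false_of_injective
    (hfin.preimage hinj.injOn) (hne.preimage' (by rwa [range_prodMap, range_prodMap]))
    (fun t ht => Subtype.ext (hemb _ ht)) ψ.toAddMonoidHom ψ.injective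
end

section
/- For each integer g ≥ 1, let W be the partial latin square consisting of the first three rows of the Cayley table of ℤ_{2g+1} (rows 0,1,2; W = {(i,j,i+j mod (2g+1)) : i ∈ {0,1,2}, j ∈ ℤ_{2g+1}}), and let B be obtained by cyclically shifting the rows (B = {(i,j,(i+1 mod 3)+j mod (2g+1)) : i ∈ {0,1,2}, j ∈ ℤ_{2g+1}}). Then (W,B) is a latin bitrade, it is separated and connected, and its genus, computed by the formula g = (2 + |W| − |R| − |C| − |S|)/2 where R, C, S are the sets of rows, columns and symbols used, equals g. -/
/-- One step of the row permutation `ψ_r`: symbol `s` maps to `t` if some cell of row `r`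
holds `s` in `W` and `t` in `B`. -/
def RowRel {R C S : Type*} (W B : Set (R × C × S)) (r : R) (s t : S) : Prop :=
  ∃ c, (r, c, s) ∈ W ∧ (r, c, t) ∈ B

/-- One step of the column permutation `ψ_c`. -/
def ColRel {R C S : Type*} (W B : Set (R × C × S)) (c : C) (s t : S) : Prop :=
  ∃ r, (r, c, s) ∈ W ∧ (r, c, t) ∈ B

/-- One step of the symbol permutation `ψ_s` (acting on columns). -/
def SymRel {R C S : Type*} (W B : Set (R × C × S)) (s : S) (c c' : C) : Prop :=
  ∃ r, (r, c, s) ∈ W ∧ (r, c', s) ∈ B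

/-- `(W,B)` is separated: for every row, column and symbol, the corresponding permutation is
a single cycle, i.e. any two entries of the row (resp. column, symbol) are connected by
iterating the permutation. -/
def Separated {R C S : Type*} (W B : Set (R × C × S)) : Prop :=
  (∀ (r : R) (s t : S), (∃ c, (r, c, s) ∈ W) → (∃ c, (r, c, t) ∈ W) →
      Relation.ReflTransGen (RowRel W B r) s t) ∧
  (∀ (c : C) (s t : S), (∃ r, (r, c, s) ∈ W) → (∃ r, (r, c, t) ∈ W) →
      Relation.ReflTransGen (ColRel W B c) s t) ∧
  (∀ (s : S) (c c' : C), (∃ r, (r, c, s) ∈ W) → (∃ r, (r, c', s) ∈ W) →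
      Relation.ReflTransGen (SymRel W B s) c c')

/-- `(W,B)` is connected: it cannot be split into two disjoint latin bitrades. -/
def ConnectedBitrade {R C S : Type*} (W B : Set (R × C × S)) : Prop :=
  ¬ ∃ W₁ W₂ B₁ B₂ : Set (R × C × S),
      IsLatinBitrade W₁ B₁ ∧ IsLatinBitrade W₂ B₂ ∧
      W₁ ∩ W₂ = ∅ ∧ W = W₁ ∪ W₂ ∧ B = B₁ ∪ B₂

/-!
Row `i` of `W` is the translate `a i + ·` of `G = ℤ_{2g+1}` with label `a i = i`, and `B` is the
same construction with the labels `a (i + 1)`: a fixed-point-free relabelling of the rows by the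
same injective labels, which is all the bitrade axioms need. In row `i` the permutation `ψ_i` is
translation by `a (i + 1) - a i ∈ {1, 1, -2}`, a single cycle because `2g + 1` is odd; columns and
symbols simply cycle through the three rows. The same two moves (to the next row, and along a row
by that difference) are forced inside any sub-bitrade, so a nonempty sub-bitrade is everything.
The genus count is `|W| = 3n`, `|R| = 3`, `|C| = |S| = n` with `n = 2g + 1`.
-/

open Relation Function

theorem Relation.ReflTransGen.of_closed {α : Type*} {r : α → α → Prop} {p : α → Prop} {x y : α}
    (h : ReflTransGen r x y) (hp : ∀ u v, r u v → p u → p v) (hx : p x) : p y := by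
  induction h with
  | refl => exact hx
  | tail _ huv ih => exact hp _ _ huv ih

theorem reflTransGen_add_of_zmultiples_eq_top {G : Type*} [AddGroup G] [Finite G] {d : G}
    (hd : AddSubgroup.zmultiples d = ⊤) (x y : G) : ReflTransGen (fun u v => v = u + d) x y := by
  have step (m : ℕ) : ReflTransGen (fun u v => v = u + d) x (x + m • d) := by
    induction m with
    | zero => simpa using ReflTransGen.refl
    | succ m ih => exact ih.tail (by rw [succ_nsmul, add_assoc])
  obtain ⟨m, hm⟩ := (AddSubmonoid.mem_multiples_iff _ _).mp <|
    mem_multiples_iff_mem_zmultiples.mpr (hd ▸ AddSubgroup.mem_top (-x + y))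
  simpa [hm] using step m

open Fin.NatCast in
theorem Fin.zmultiples_one {k : ℕ} [NeZero k] : AddSubgroup.zmultiples (1 : Fin k) = ⊤ :=
  (AddSubgroup.eq_top_iff' _).mpr fun i => AddSubgroup.mem_zmultiples_iff.mpr
    ⟨i.val, by rw [natCast_zsmul, nsmul_one, Fin.cast_val_eq_self]⟩

theorem Fin.reflTransGen_add_one {k : ℕ} [NeZero k] (i j : Fin k) :
    ReflTransGen (fun u v => v = u + 1) i j :=
  reflTransGen_add_of_zmultiples_eq_top Fin.zmultiples_one i j

theorem Fin.add_one_ne_self {k : ℕ} [NeZero k] (hk : 1 < k) (i : Fin k) : i + 1 ≠ i := by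
  obtain ⟨m, rfl⟩ := Nat.exists_eq_add_of_lt hk
  simp

theorem ZMod.zmultiples_eq_top_of_isUnit {n : ℕ} {u : ZMod n} (hu : IsUnit u) :
    AddSubgroup.zmultiples u = ⊤ := by
  obtain ⟨u, rfl⟩ := hu
  refine (AddSubgroup.eq_top_iff' _).mpr fun x => ⟨(x * ↑u⁻¹ : ZMod n).cast, ?_⟩
  change ((x * ↑u⁻¹ : ZMod n).cast : ℤ) • (u : ZMod n) = x
  rw [zsmul_eq_mul, ZMod.intCast_zmod_cast, mul_assoc, Units.inv_mul, mul_one]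

section CayleyRows

variable {ι G : Type*} [AddCommGroup G]

def cayleyRows (a : ι → G) : Set (ι × G × G) := {t | t.2.2 = a t.1 + t.2.1}

variable {a b : ι → G}

@[simp] theorem mem_cayleyRows {i : ι} {c s : G} : (i, c, s) ∈ cayleyRows a ↔ s = a i + c :=
  Iff.rfl

theorem isPLS_cayleyRows (ha : Injective a) : IsPLS (cayleyRows a) := by
  rintro ⟨i, c, s⟩ hs ⟨i', c', s'⟩ hs'
  rw [mem_cayleyRows] at hs hs'
  subst hs hs'
  refine ⟨?_, ?_, ?_⟩ <;> rintro ⟨h₁, h₂⟩ <;> dsimp only at h₁ h₂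
  · rw [h₁, h₂]
  · subst h₁; rw [add_left_cancel h₂]
  · subst h₁; rw [ha (add_right_cancel h₂)]

theorem disjoint_cayleyRows (hab : ∀ i, a i ≠ b i) : Disjoint (cayleyRows a) (cayleyRows b) :=
  Set.disjoint_left.mpr fun ⟨i, _, _⟩ ha hb => hab i (add_right_cancel (ha.symm.trans hb))

theorem bitradeCond_cayleyRows (hb : Injective b) (hrange : Set.range a ⊆ Set.range b)
    (hab : ∀ i, a i ≠ b i) : BitradeCond (cayleyRows a) (cayleyRows b) := by
  rintro ⟨i, c, s⟩ hs
  rw [mem_cayleyRows] at hs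
  subst hs
  obtain ⟨r, hr⟩ := hrange ⟨i, rfl⟩
  refine ⟨⟨r, ⟨?_, ?_⟩, ?_⟩, ⟨a i + c - b i, ⟨?_, ?_⟩, ?_⟩, ⟨b i + c, ⟨?_, rfl⟩, ?_⟩⟩
  · rintro rfl; exact hab r hr.symm
  · simp [hr]
  · rintro r' ⟨-, hr'⟩
    exact hb (add_right_cancel ((mem_cayleyRows.mp hr').symm.trans (by rw [hr])))
  · intro h
    apply hab i
    calc a i = a i + c - b i - c + b i := by abel
      _ = b i := by rw [h]; abel
  · simp
  · rintro c' ⟨-, hc'⟩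
    simp only [mem_cayleyRows] at hc'
    rw [hc']; abel
  · intro h; exact hab i (add_right_cancel h.symm)
  · rintro s' ⟨-, hs'⟩; exact hs'

theorem isLatinBitrade_cayleyRows [Nonempty ι] (ha : Injective a) (hb : Injective b)
    (hrange : Set.range a = Set.range b) (hab : ∀ i, a i ≠ b i) :
    IsLatinBitrade (cayleyRows a) (cayleyRows b) := by
  obtain ⟨i⟩ := ‹Nonempty ι›
  exact ⟨⟨(i, 0, a i + 0), rfl⟩, ⟨(i, 0, b i + 0), rfl⟩, disjoint_cayleyRows hab,
    isPLS_cayleyRows ha, isPLS_cayleyRows hb, bitradeCond_cayleyRows hb hrange.le hab,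
    bitradeCond_cayleyRows ha hrange.ge fun i => (hab i).symm⟩

end CayleyRows

section Shift

variable {k : ℕ} [NeZero k] {G : Type*} [AddCommGroup G] {a : Fin k → G}

theorem isLatinBitrade_cayleyRows_shift (hk : 1 < k) (ha : Injective a) :
    IsLatinBitrade (cayleyRows a) (cayleyRows fun i => a (i + 1)) :=
  isLatinBitrade_cayleyRows ha (ha.comp (add_left_injective 1))
    ((add_right_surjective 1).range_comp a).symm fun i => ha.ne (Fin.add_one_ne_self hk i).symm

theorem rowRel_cayleyRows_shift (i : Fin k) (s : G) :
    RowRel (cayleyRows a) (cayleyRows fun i => a (i + 1)) i s (s + (a (i + 1) - a i)) :=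
  ⟨s - a i, by simp, by simp only [mem_cayleyRows]; abel⟩

theorem colRel_cayleyRows_shift (i : Fin k) (c : G) :
    ColRel (cayleyRows a) (cayleyRows fun i => a (i + 1)) c (a i + c) (a (i + 1) + c) :=
  ⟨i, rfl, rfl⟩

theorem symRel_cayleyRows_shift (i : Fin k) (s : G) :
    SymRel (cayleyRows a) (cayleyRows fun i => a (i + 1)) s (s - a i) (s - a (i + 1)) :=
  ⟨i, by simp, by simp⟩

theorem separated_cayleyRows_shift [Finite G]
    (hgen : ∀ i, AddSubgroup.zmultiples (a (i + 1) - a i) = ⊤) :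
    Separated (cayleyRows a) (cayleyRows fun i => a (i + 1)) := by
  refine ⟨fun r s t _ _ => ?_, fun c s t ⟨i, hs⟩ ⟨j, ht⟩ => ?_, fun s c c' ⟨i, hc⟩ ⟨j, hc'⟩ => ?_⟩
  · exact ReflTransGen.mono (fun u v (huv : v = u + _) => huv ▸ rowRel_cayleyRows_shift r u) s t
      (reflTransGen_add_of_zmultiples_eq_top (hgen r) s t)
  · rw [mem_cayleyRows.mp hs, mem_cayleyRows.mp ht]
    exact (Fin.reflTransGen_add_one i j).lift (a · + c)
      fun u v huv => huv ▸ colRel_cayleyRows_shift u c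
  · rw [eq_sub_of_add_eq' (mem_cayleyRows.mp hc).symm,
      eq_sub_of_add_eq' (mem_cayleyRows.mp hc').symm]
    exact (Fin.reflTransGen_add_one i j).lift (s - a ·)
      fun u v huv => huv ▸ symRel_cayleyRows_shift u s

section SubBitrade

variable {W₁ B₁ : Set (Fin k × G × G)}

theorem mem_subBitrade_step (ha : Injective a) (hW : W₁ ⊆ cayleyRows a)
    (hB : B₁ ⊆ cayleyRows fun i => a (i + 1)) (hWB : BitradeCond W₁ B₁) (hBW : BitradeCond B₁ W₁)
    {i : Fin k} {c : G} (h : (i, c, a i + c) ∈ W₁) :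
    (i + 1, c, a (i + 1) + c) ∈ W₁ ∧
      (i, c + (a (i + 1) - a i), a i + (c + (a (i + 1) - a i))) ∈ W₁ := by
  obtain ⟨-, -, s, ⟨-, hs⟩, -⟩ := hWB _ h
  obtain rfl : s = a (i + 1) + c := hB hs
  obtain ⟨⟨r, ⟨-, hr⟩, -⟩, ⟨c', ⟨-, hc'⟩, -⟩, -⟩ := hBW _ hs
  constructor
  · obtain rfl : r = i + 1 := ha (add_right_cancel (hW hr).symm)
    exact hr
  · obtain rfl : c' = c + (a (i + 1) - a i) := by
      have : a (i + 1) + c = a i + c' := hW hc'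
      calc c' = a i + c' - a i := by abel
        _ = c + (a (i + 1) - a i) := by rw [← this]; abel
    rwa [show a i + (c + (a (i + 1) - a i)) = a (i + 1) + c by abel]

theorem cayleyRows_subset_of_subBitrade [Finite G] (ha : Injective a)
    (hgen : ∀ i, AddSubgroup.zmultiples (a (i + 1) - a i) = ⊤) (hW : W₁ ⊆ cayleyRows a)
    (hB : B₁ ⊆ cayleyRows fun i => a (i + 1)) (hWB : BitradeCond W₁ B₁) (hBW : BitradeCond B₁ W₁)
    (hne : W₁.Nonempty) : cayleyRows a ⊆ W₁ := by
  obtain ⟨⟨i₀, c₀, s₀⟩, h₀⟩ := hne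
  obtain rfl : s₀ = a i₀ + c₀ := hW h₀
  have row (c : G) : (i₀, c, a i₀ + c) ∈ W₁ :=
    (reflTransGen_add_of_zmultiples_eq_top (hgen i₀) c₀ c).of_closed
      (p := fun c => (i₀, c, a i₀ + c) ∈ W₁)
      (fun u v huv hu => huv ▸ (mem_subBitrade_step ha hW hB hWB hBW hu).2) h₀
  rintro ⟨j, c, s⟩ hs
  obtain rfl : s = a j + c := hs
  exact (Fin.reflTransGen_add_one i₀ j).of_closed
    (p := fun i => (i, c, a i + c) ∈ W₁)
    (fun u v huv hu => huv ▸ (mem_subBitrade_step ha hW hB hWB hBW hu).1) (row c)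

end SubBitrade

theorem connectedBitrade_cayleyRows_shift [Finite G] (ha : Injective a)
    (hgen : ∀ i, AddSubgroup.zmultiples (a (i + 1) - a i) = ⊤) :
    ConnectedBitrade (cayleyRows a) (cayleyRows fun i => a (i + 1)) := by
  rintro ⟨W₁, W₂, B₁, B₂, ⟨hne, -, -, -, -, hWB, hBW⟩, ⟨⟨t, ht⟩, -⟩, hdisj, hW, hB⟩
  have hsub := cayleyRows_subset_of_subBitrade ha hgen (hW ▸ Set.subset_union_left)
    (hB ▸ Set.subset_union_left) hWB hBW hne
  exact Set.eq_empty_iff_forall_notMem.mp hdisj t ⟨hsub (hW ▸ Set.mem_union_right _ ht), ht⟩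

end Shift

section Genus

variable {ι G : Type*} [AddCommGroup G] (a : ι → G)

def cayleyRowsEquiv : cayleyRows a ≃ ι × G where
  toFun t := (t.1.1, t.1.2.1)
  invFun p := ⟨(p.1, p.2, a p.1 + p.2), rfl⟩
  left_inv := by
    rintro ⟨⟨i, c, s⟩, hs⟩
    obtain rfl : s = a i + c := hs
    rfl
  right_inv _ := rfl

theorem ncard_cayleyRows : (cayleyRows a).ncard = Nat.card ι * Nat.card G := by
  rw [← Nat.card_coe_set_eq, Nat.card_congr (cayleyRowsEquiv a), Nat.card_prod]

theorem rows_cayleyRows : {r | ∃ c s, (r, c, s) ∈ cayleyRows a} = Set.univ :=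
  Set.eq_univ_of_forall fun r => ⟨0, a r + 0, rfl⟩

theorem cols_cayleyRows [Nonempty ι] : {c | ∃ r s, (r, c, s) ∈ cayleyRows a} = Set.univ :=
  Set.eq_univ_of_forall fun c => ⟨Classical.arbitrary ι, a _ + c, rfl⟩

theorem symbols_cayleyRows [Nonempty ι] : {s | ∃ r c, (r, c, s) ∈ cayleyRows a} = Set.univ :=
  Set.eq_univ_of_forall fun s => ⟨Classical.arbitrary ι, s - a (Classical.arbitrary ι), by simp⟩

end Genus

theorem ZMod.natCast_fin_injective {k n : ℕ} (hkn : k ≤ n) :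
    Injective fun i : Fin k => ((i : ℕ) : ZMod n) := fun i j h => Fin.ext <| by
  simpa [ZMod.natCast_eq_natCast_iff', Nat.mod_eq_of_lt (i.2.trans_le hkn),
    Nat.mod_eq_of_lt (j.2.trans_le hkn)] using h

theorem ZMod.isUnit_two_of_odd {n : ℕ} (hn : Odd n) : IsUnit (2 : ZMod n) := by
  simpa using (ZMod.isUnit_iff_coprime 2 n).mpr (Nat.coprime_two_left.mpr hn)

/-- For each `g ≥ 1`, the first three rows of the Cayley table of `ℤ_{2g+1}`, together with the
cyclic shift of these rows, form a separated connected latin bitrade whose genus, computed as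
`(2 + |W| − |R| − |C| − |S|)/2`, equals `g`. -/
theorem stmt7 (g : ℕ) (hg : 1 ≤ g) :
    let W : Set (Fin 3 × ZMod (2 * g + 1) × ZMod (2 * g + 1)) :=
      {t | t.2.2 = ((t.1 : ℕ) : ZMod (2 * g + 1)) + t.2.1}
    let B : Set (Fin 3 × ZMod (2 * g + 1) × ZMod (2 * g + 1)) :=
      {t | t.2.2 = ((((t.1 : ℕ) + 1) % 3 : ℕ) : ZMod (2 * g + 1)) + t.2.1}
    IsLatinBitrade W B ∧ Separated W B ∧ ConnectedBitrade W B ∧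
    2 * (g : ℤ) = 2 + W.ncard
        - {r | ∃ c s, (r, c, s) ∈ W}.ncard
        - {c | ∃ r s, (r, c, s) ∈ W}.ncard
        - {s | ∃ r c, (r, c, s) ∈ W}.ncard := by
  intro W B
  set a : Fin 3 → ZMod (2 * g + 1) := fun i => (i : ℕ)
  have hW : W = cayleyRows a := rfl
  -- `((i + 1 : Fin 3) : ℕ)` unfolds to `((i : ℕ) + 1) % 3`
  have hB : B = cayleyRows fun i => a (i + 1) := rfl
  have ha : Injective a := ZMod.natCast_fin_injective (by omega)
  have hgen (i : Fin 3) : AddSubgroup.zmultiples (a (i + 1) - a i) = ⊤ := by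
    refine ZMod.zmultiples_eq_top_of_isUnit ?_
    fin_cases i <;> simp [a] <;> norm_num [ZMod.isUnit_two_of_odd (odd_two_mul_add_one g)]
  rw [hB, hW, ncard_cayleyRows, rows_cayleyRows, cols_cayleyRows, symbols_cayleyRows]
  refine ⟨isLatinBitrade_cayleyRows_shift (by norm_num) ha, separated_cayleyRows_shift hgen,
    connectedBitrade_cayleyRows_shift ha hgen, ?_⟩
  simp only [Set.ncard_univ, Nat.card_fin, Nat.card_zmod]
  push_cast
  ring
end

section
/- Let M' be an n×n matrix with nonnegative real entries and per(M') = 0. Then there exist subsets I of rows and J of columns with |I| = n−k+1 and |J| = k for some 1 ≤ k ≤ n such that M' has all entries zero on I × J (Frobenius–König theorem). -/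
/-! Hall's marriage theorem, applied to the bipartite graph of nonzero entries, gives either a
permutation avoiding all zero entries (a positive term of the permanent) or a set `s` of rows whose
nonzero entries lie in fewer than `#s` columns; then `#B + 1` rows of `s` and the columns outside
the set `B` of those columns form a zero block of total size `n + 1`. -/

/-- The permanent of a square real matrix. -/
def permanent {n : ℕ} (M : Matrix (Fin n) (Fin n) ℝ) : ℝ :=
  ∑ σ : Equiv.Perm (Fin n), ∏ i, M i (σ i)

open Finset

namespace Matrix

variable {ι R : Type*} [Fintype ι] [DecidableEq ι] [Zero R] [DecidableEq R]

def rowSupport (M : Matrix ι ι R) (i : ι) : Finset ι := {j | M i j ≠ 0}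

theorem exists_perm_forall_ne_zero_of_card_le_card_biUnion (M : Matrix ι ι R)
    (hall : ∀ s : Finset ι, #s ≤ #(s.biUnion M.rowSupport)) :
    ∃ σ : Equiv.Perm ι, ∀ i, M i (σ i) ≠ 0 := by
  obtain ⟨f, hf_inj, hf⟩ := (all_card_le_biUnion_card_iff_existsInjective' _).mp hall
  refine ⟨Equiv.ofBijective f (Finite.injective_iff_bijective.mp hf_inj), fun i => ?_⟩
  simpa [rowSupport] using hf i

theorem exists_zero_block_of_card_biUnion_lt (M : Matrix ι ι R) {s : Finset ι}
    (hs : #(s.biUnion M.rowSupport) < #s) :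
    ∃ I J : Finset ι, #I + #J = Fintype.card ι + 1 ∧ ∀ i ∈ I, ∀ j ∈ J, M i j = 0 := by
  set B := s.biUnion M.rowSupport
  obtain ⟨I, hIs, hI⟩ := exists_subset_card_eq (n := #B + 1) hs
  refine ⟨I, Bᶜ, ?_, fun i hi j hj => ?_⟩
  · have := card_le_univ B
    rw [card_compl]
    omega
  · by_contra hij
    exact mem_compl.mp hj (mem_biUnion.mpr ⟨i, hIs hi, by simpa [rowSupport] using hij⟩)

theorem exists_perm_forall_ne_zero_or_exists_zero_block (M : Matrix ι ι R) :
    (∃ σ : Equiv.Perm ι, ∀ i, M i (σ i) ≠ 0) ∨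
      ∃ I J : Finset ι, #I + #J = Fintype.card ι + 1 ∧ ∀ i ∈ I, ∀ j ∈ J, M i j = 0 := by
  by_cases hall : ∀ s : Finset ι, #s ≤ #(s.biUnion M.rowSupport)
  · exact .inl (M.exists_perm_forall_ne_zero_of_card_le_card_biUnion hall)
  · obtain ⟨s, hs⟩ := not_forall.mp hall
    exact .inr (M.exists_zero_block_of_card_biUnion_lt (not_le.mp hs))

end Matrix

theorem permanent_pos_of_forall_ne_zero {n : ℕ} {M : Matrix (Fin n) (Fin n) ℝ}
    (hnn : ∀ i j, 0 ≤ M i j) {σ : Equiv.Perm (Fin n)} (hσ : ∀ i, M i (σ i) ≠ 0) :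
    0 < permanent M :=
  sum_pos' (fun τ _ => prod_nonneg fun i _ => hnn i (τ i))
    ⟨σ, mem_univ σ, prod_pos fun i _ => (hnn i (σ i)).lt_of_ne' (hσ i)⟩

/-- Frobenius–König theorem: a nonnegative `n×n` matrix with zero permanent contains an
`(n−k+1) × k` all-zero submatrix for some `1 ≤ k ≤ n`. -/
theorem stmt11 (n : ℕ) (M' : Matrix (Fin n) (Fin n) ℝ)
    (hnn : ∀ i j, 0 ≤ M' i j) (hper : permanent M' = 0) :
    ∃ k : ℕ, 1 ≤ k ∧ k ≤ n ∧
      ∃ (I J : Finset (Fin n)), I.card = n - k + 1 ∧ J.card = k ∧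
        ∀ i ∈ I, ∀ j ∈ J, M' i j = 0 := by
  classical
  rcases M'.exists_perm_forall_ne_zero_or_exists_zero_block with ⟨σ, hσ⟩ | ⟨I, J, hcard, hzero⟩
  · exact absurd hper (permanent_pos_of_forall_ne_zero hnn hσ).ne'
  · rw [Fintype.card_fin] at hcard
    have hI : #I ≤ n := by simpa using card_le_univ I
    have hJ : #J ≤ n := by simpa using card_le_univ J
    exact ⟨#J, by omega, hJ, I, J, by omega, rfl, hzero⟩
end

section
/- The 3×9 latin rectangle W with rows (1,2,3,4,5,6,7,8,9), (2,3,4,5,6,7,8,9,1), (4,5,9,8,1,3,2,6,7) cannot be embedded in any group. Specifically, if W were embedded in a group G, then by Suschkewitsch's condition the permutations π₁₂ = (123456789) and π₁₃ = (148639725) would generate a permutation group of order at most 9; but the group generated by π₁₂ and π₁₃ has order greater than 9, a contradiction. -/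
/-! Suschkewitsch's argument: if `f i * g c = h (L i c)` in a group with `h` injective, then a
permutation carrying a row `i` that is a bijection onto the symbols to a row `j` becomes, through
`h`, left multiplication by `f j * (f i)⁻¹`. Such permutations form a group acting freely on the
symbols, so it has at most as many elements as there are symbols. For `W13` the 9-cycle `π₁₂`
does not commute with `π₁₃`, so the group they generate strictly contains the cyclic group of
order 9 generated by `π₁₂`. -/

/-- The 3×9 latin rectangle with rows `(1,…,9)`, `(2,…,9,1)`, `(4,5,9,8,1,3,2,6,7)`,
written 0-based: symbols `0,…,8`. -/
def W13 : Fin 3 → Fin 9 → Fin 9 :=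
  ![![0, 1, 2, 3, 4, 5, 6, 7, 8],
    ![1, 2, 3, 4, 5, 6, 7, 8, 0],
    ![3, 4, 8, 7, 0, 2, 1, 5, 6]]

/-- The row permutation `π₁₂` (0-based: `s ↦ s + 1`). -/
noncomputable def pi12 : Equiv.Perm (Fin 9) :=
  Equiv.ofBijective (fun c => ![1, 2, 3, 4, 5, 6, 7, 8, 0] c) (by decide)

/-- The row permutation `π₁₃`. -/
noncomputable def pi13 : Equiv.Perm (Fin 9) :=
  Equiv.ofBijective (fun c => ![3, 4, 8, 7, 0, 2, 1, 5, 6] c) (by decide)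

section Suschkewitsch

variable {G β : Type*} [Group G]

def translationSubgroup (h : β → G) : Subgroup (Equiv.Perm β) where
  carrier := {σ | ∃ a : G, ∀ x, h (σ x) = a * h x}
  one_mem' := ⟨1, fun x => by simp⟩
  mul_mem' := by
    rintro σ τ ⟨a, ha⟩ ⟨b, hb⟩
    exact ⟨a * b, fun x => by simp only [Equiv.Perm.mul_apply, ha, hb, mul_assoc]⟩
  inv_mem' := by
    rintro σ ⟨a, ha⟩
    refine ⟨a⁻¹, fun x => ?_⟩
    rw [eq_inv_mul_iff_mul_eq, ← ha]
    exact congrArg h (σ.apply_symm_apply x)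

theorem card_translationSubgroup_le [Finite β] [Nonempty β] {h : β → G}
    (hh : Function.Injective h) : Nat.card (translationSubgroup h) ≤ Nat.card β := by
  let x₀ : β := Classical.arbitrary β
  refine Nat.card_le_card_of_injective (fun σ => (σ : Equiv.Perm β) x₀) ?_
  rintro ⟨σ, a, ha⟩ ⟨τ, b, hb⟩ (hστ : σ x₀ = τ x₀)
  have hab : a = b := mul_right_cancel (by rw [← ha, ← hb, hστ])
  exact Subtype.ext <| Equiv.ext fun x => hh <| by rw [ha, hb, hab]

theorem mem_translationSubgroup_of_maps_row {ι α : Type*} {L : ι → α → β}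
    {f : ι → G} {g : α → G} {h : β → G} (hmul : ∀ i c, f i * g c = h (L i c))
    {π : Equiv.Perm β} {i j : ι} (hrow : Function.Surjective (L i))
    (hπ : ∀ c, π (L i c) = L j c) : π ∈ translationSubgroup h := by
  refine ⟨f j * (f i)⁻¹, fun x => ?_⟩
  obtain ⟨c, rfl⟩ := hrow x
  rw [hπ, ← hmul, ← hmul]
  group

/-- Suschkewitsch's theorem. -/
theorem card_closure_rowPerms_le [Finite β] [Nonempty β] {ι α : Type*} {L : ι → α → β}
    {f : ι → G} {g : α → G} {h : β → G} (hh : Function.Injective h)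
    (hmul : ∀ i c, f i * g c = h (L i c)) {S : Set (Equiv.Perm β)}
    (hS : ∀ π ∈ S, ∃ i j, Function.Surjective (L i) ∧ ∀ c, π (L i c) = L j c) :
    Nat.card (Subgroup.closure S) ≤ Nat.card β := by
  have hle : Subgroup.closure S ≤ translationSubgroup h := by
    refine (Subgroup.closure_le _).2 fun π hπ => ?_
    obtain ⟨i, j, hrow, hπij⟩ := hS π hπ
    exact mem_translationSubgroup_of_maps_row hmul hrow hπij
  exact (Subgroup.card_le_of_le hle).trans (card_translationSubgroup_le hh)

end Suschkewitsch

theorem orderOf_lt_card_closure_pair {G : Type*} [Group G] [Finite G] {a b : G}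
    (hab : ¬Commute a b) : orderOf a < Nat.card (Subgroup.closure {a, b}) := by
  by_contra! hcard
  have hle : Subgroup.zpowers a ≤ Subgroup.closure {a, b} :=
    Subgroup.zpowers_le.2 (Subgroup.subset_closure (Set.mem_insert a _))
  have heq := Subgroup.eq_of_le_of_card_ge hle (by rwa [Nat.card_zpowers])
  obtain ⟨k, rfl⟩ := Subgroup.mem_zpowers_iff.1
    (heq ▸ Subgroup.subset_closure (Set.mem_insert_of_mem a rfl) : b ∈ Subgroup.zpowers a)
  exact hab (Commute.zpow_right (Commute.refl a) k)

theorem orderOf_pi12 : orderOf pi12 = 9 :=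
  orderOf_eq_prime_pow (p := 3) (n := 1) (by decide) (by decide)

/-- The latin rectangle `W13` cannot be embedded in any group; moreover the group generated
by the row permutations `π₁₂` and `π₁₃` has order greater than 9 (which, by Suschkewitsch's
condition, is why no embedding exists). -/
theorem stmt13 :
    (¬ ∃ (G : Type) (_ : Group G) (f : Fin 3 → G) (g : Fin 9 → G) (h : Fin 9 → G),
        Function.Injective f ∧ Function.Injective g ∧ Function.Injective h ∧
        ∀ i j, f i * g j = h (W13 i j)) ∧
    9 < Nat.card (Subgroup.closure {pi12, pi13} : Subgroup (Equiv.Perm (Fin 9))) := by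
  have hcard : 9 < Nat.card (Subgroup.closure {pi12, pi13} : Subgroup (Equiv.Perm (Fin 9))) :=
    orderOf_pi12.symm.trans_lt <|
      orderOf_lt_card_closure_pair (show pi12 * pi13 ≠ pi13 * pi12 by decide)
  refine ⟨?_, hcard⟩
  rintro ⟨G, _, f, g, h, -, -, hh, hmul⟩
  have hrow0 : Function.Surjective (W13 0) := by decide
  have hle := card_closure_rowPerms_le hh hmul (S := {pi12, pi13}) <| by
    rintro π (rfl | rfl)
    exacts [⟨0, 1, hrow0, by decide⟩, ⟨0, 2, hrow0, by decide⟩]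
  rw [Nat.card_fin] at hle
  omega
end

section
/- If a latin rectangle contains two rows i, j such that the permutation π_{ij} (mapping, for each column, the symbol in row i to the symbol in row j) is not regular (i.e., its cycles do not all have the same length), then the latin rectangle cannot be embedded in any group. -/
/-!
In a group embedding `f a * g b = h (L a b)`, the symbol `L i c` is sent by `h` to `f i * g c`,
so `h (π (L i c)) = f j * g c = (f j * (f i)⁻¹) * h (L i c)`: the injection `h` conjugates `π`
to left multiplication by `f j * (f i)⁻¹`. Every point of a left multiplication by `u` has
minimal period `orderOf u`, and an injective semiconjugacy preserves minimal periods, so all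
cycles of `π` have the same length.
-/

open Function

theorem Function.Semiconj.minimalPeriod_eq {α β : Type*} {fa : α → α} {fb : β → β} {g : α → β}
    (hg : Semiconj g fa fb) (hinj : Injective g) (x : α) :
    minimalPeriod fa x = minimalPeriod fb (g x) :=
  minimalPeriod_eq_minimalPeriod_iff.2 fun n =>
    ⟨fun hx => hx.map hg, fun hx => hinj ((hg.iterate_right n x).trans hx)⟩

theorem minimalPeriod_mul_left {M : Type*} [RightCancelMonoid M] (u y : M) :
    minimalPeriod (u * ·) y = orderOf u := by
  have hconj : Semiconj (· * y) (u * ·) (u * ·) := fun x => mul_assoc u x y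
  simpa [orderOf] using (hconj.minimalPeriod_eq (mul_left_injective y) 1).symm

theorem semiconj_rowPerm_mul_left {G R C S : Type*} [Group G] {L : R → C → S} {i j : R}
    {π : S → S} {f : R → G} {g : C → G} {h : S → G} (hrow : Surjective (L i))
    (hπ : ∀ c, π (L i c) = L j c) (hmul : ∀ a b, f a * g b = h (L a b)) :
    Semiconj h π (f j * (f i)⁻¹ * ·) := by
  intro x
  obtain ⟨c, rfl⟩ := hrow x
  simp only [hπ, ← hmul]
  group

theorem stmt14_general {r n : ℕ} (L : Fin r → Fin n → Fin n)
    (hrow : ∀ i, Function.Bijective (L i))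
    (i j : Fin r) (π : Equiv.Perm (Fin n))
    (hπ : ∀ c, π (L i c) = L j c)
    (hirreg : ∃ s t : Fin n,
      Function.minimalPeriod (⇑π) s ≠ Function.minimalPeriod (⇑π) t) :
    ¬ ∃ (G : Type) (_ : Group G) (f : Fin r → G) (g : Fin n → G) (h : Fin n → G),
        Function.Injective f ∧ Function.Injective g ∧ Function.Injective h ∧
        ∀ a b, f a * g b = h (L a b) := by
  rintro ⟨G, _, f, g, h, -, -, hh, hmul⟩
  obtain ⟨s, t, hne⟩ := hirreg
  have hconj := semiconj_rowPerm_mul_left (hrow i).2 hπ hmul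
  apply hne
  rw [hconj.minimalPeriod_eq hh, hconj.minimalPeriod_eq hh, minimalPeriod_mul_left,
    minimalPeriod_mul_left]

/-- If a latin rectangle `L` (on rows `Fin r`, columns and symbols `Fin n`) has two rows `i, j`
such that the permutation `π = π_{ij}` (sending, in each column, the symbol of row `i` to the
symbol of row `j`) is not regular — i.e. two of its cycles have different lengths — then `L`
cannot be embedded in any group. -/
theorem stmt14 {r n : ℕ} (L : Fin r → Fin n → Fin n)
    (hrow : ∀ i, Function.Bijective (L i))
    (hcol : ∀ c, Function.Injective (fun i => L i c))
    (i j : Fin r) (π : Equiv.Perm (Fin n))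
    (hπ : ∀ c, π (L i c) = L j c)
    (hirreg : ∃ s t : Fin n,
      Function.minimalPeriod (⇑π) s ≠ Function.minimalPeriod (⇑π) t) :
    ¬ ∃ (G : Type) (_ : Group G) (f : Fin r → G) (g : Fin n → G) (h : Fin n → G),
        Function.Injective f ∧ Function.Injective g ∧ Function.Injective h ∧
        ∀ a b, f a * g b = h (L a b) :=
  stmt14_general L hrow i j π hπ hirreg
end

section
/- Every latin bitrade has size at least 4, and a latin bitrade of size exactly 4 is an intercalate: W = {(r₁,c₁,s₁),(r₁,c₂,s₂),(r₂,c₁,s₂),(r₂,c₂,s₁)} and B = {(r₁,c₁,s₂),(r₁,c₂,s₁),(r₂,c₁,s₁),(r₂,c₂,s₂)} for distinct rows r₁≠r₂, columns c₁≠c₂ and symbols s₁≠s₂. -/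
/-!
Each entry of `W` shares its row with a second entry of `W` (pass to its row mate in `B`,
then to that entry's symbol mate in `W`), and likewise its column and its symbol. An entry, a
row mate, a column mate and a row mate of the column mate are four distinct entries of `W`.
If `|W| = 4` they exhaust `W`, and the remaining column and symbol mates force an
intercalate. Then every entry of `B` has its row among the rows of `W` and its
(column, symbol) pair among those of `W`, so `B` lies in the complementary intercalate; and
each cell of `W` carries in `B` the other symbol of its column, so `B` fills it.
-/

section

variable {R C S : Type*} {W B : Set (R × C × S)} {t : R × C × S}

lemma exists_mem_same_row_of_bitradeCond (hWB : BitradeCond W B) (hBW : BitradeCond B W)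
    (ht : t ∈ W) : ∃ c s, c ≠ t.2.1 ∧ s ≠ t.2.2 ∧ (t.1, c, s) ∈ W := by
  obtain ⟨-, ⟨c, ⟨hc, hcB⟩, -⟩, -⟩ := hWB t ht
  obtain ⟨-, -, ⟨s, ⟨hs, hsW⟩, -⟩⟩ := hBW _ hcB
  exact ⟨c, s, hc, hs, hsW⟩

lemma exists_mem_same_col_of_bitradeCond (hWB : BitradeCond W B) (hBW : BitradeCond B W)
    (ht : t ∈ W) : ∃ r s, r ≠ t.1 ∧ s ≠ t.2.2 ∧ (r, t.2.1, s) ∈ W := by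
  obtain ⟨⟨r, ⟨hr, hrB⟩, -⟩, -, -⟩ := hWB t ht
  obtain ⟨-, -, ⟨s, ⟨hs, hsW⟩, -⟩⟩ := hBW _ hrB
  exact ⟨r, s, hr, hs, hsW⟩

lemma exists_mem_same_symbol_of_bitradeCond (hWB : BitradeCond W B) (hBW : BitradeCond B W)
    (ht : t ∈ W) : ∃ r c, r ≠ t.1 ∧ c ≠ t.2.1 ∧ (r, c, t.2.2) ∈ W := by
  obtain ⟨⟨r, ⟨hr, hrB⟩, -⟩, -, -⟩ := hWB t ht
  obtain ⟨-, ⟨c, ⟨hc, hcW⟩, -⟩, -⟩ := hBW _ hrB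
  exact ⟨r, c, hr, hc, hcW⟩

/-- The symbol of `B` in the cell of `(r, c, s) ∈ W` recurs in `W` elsewhere in column `c`. -/
lemma mem_of_bitradeCond_of_mem_col (hWB : BitradeCond W B) (hBW : BitradeCond B W)
    {r : R} {c : C} {s s₀ : S} (ht : (r, c, s) ∈ W)
    (hcol : ∀ r' s', r' ≠ r → (r', c, s') ∈ W → s' = s₀) : (r, c, s₀) ∈ B := by
  obtain ⟨-, -, ⟨s', ⟨-, hB⟩, -⟩⟩ := hWB _ ht
  obtain ⟨⟨r', ⟨hr', hW⟩, -⟩, -, -⟩ := hBW _ hB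
  rwa [← hcol r' s' hr' hW]

def intercalate (r₁ r₂ : R) (c₁ c₂ : C) (s₁ s₂ : S) : Set (R × C × S) :=
  {(r₁, c₁, s₁), (r₁, c₂, s₂), (r₂, c₁, s₂), (r₂, c₂, s₁)}

lemma exists_four_subset_of_bitradeCond (hne : W.Nonempty) (hWB : BitradeCond W B)
    (hBW : BitradeCond B W) :
    ∃ (r₁ r₂ : R) (c₁ c₂ c₃ : C) (s₁ s₂ s₃ s₄ : S), r₁ ≠ r₂ ∧ c₂ ≠ c₁ ∧ c₃ ≠ c₁ ∧ s₂ ≠ s₁ ∧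
      {(r₁, c₁, s₁), (r₁, c₂, s₂), (r₂, c₁, s₃), (r₂, c₃, s₄)} ⊆ W := by
  obtain ⟨⟨r₁, c₁, s₁⟩, ha⟩ := hne
  obtain ⟨c₂, s₂, hc₂, hs₂, hb⟩ := exists_mem_same_row_of_bitradeCond hWB hBW ha
  obtain ⟨r₂, s₃, hr, -, hu⟩ := exists_mem_same_col_of_bitradeCond hWB hBW ha
  obtain ⟨c₃, s₄, hc₃, -, hd⟩ := exists_mem_same_row_of_bitradeCond hWB hBW hu
  refine ⟨r₁, r₂, c₁, c₂, c₃, s₁, s₂, s₃, s₄, hr.symm, hc₂, hc₃, hs₂, ?_⟩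
  simp only [Set.insert_subset_iff, Set.singleton_subset_iff]
  exact ⟨ha, hb, hu, hd⟩

lemma ncard_eq_four_of_ne {r₁ r₂ : R} {c₁ c₂ c₃ : C} {s₁ s₂ s₃ s₄ : S} (hr : r₁ ≠ r₂)
    (hc₂ : c₂ ≠ c₁) (hc₃ : c₃ ≠ c₁) :
    ({(r₁, c₁, s₁), (r₁, c₂, s₂), (r₂, c₁, s₃), (r₂, c₃, s₄)} : Set (R × C × S)).ncard = 4 :=
  Set.ncard_eq_four.2 ⟨_, _, _, _, by simp [hc₂.symm], by simp [hr], by simp [hr], by simp [hr],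
    by simp [hr], by simp [hc₃.symm], rfl⟩

lemma four_le_ncard_of_bitradeCond (hW : W.Finite) (hne : W.Nonempty)
    (hWB : BitradeCond W B) (hBW : BitradeCond B W) : 4 ≤ W.ncard := by
  obtain ⟨_, _, _, _, _, _, _, _, _, hr, hc₂, hc₃, -, hsub⟩ :=
    exists_four_subset_of_bitradeCond hne hWB hBW
  exact (ncard_eq_four_of_ne hr hc₂ hc₃).ge.trans (Set.ncard_le_ncard hsub hW)

lemma exists_eq_intercalate_of_ncard_eq_four (hW : W.Finite) (h4 : W.ncard = 4)
    (hne : W.Nonempty) (hWB : BitradeCond W B) (hBW : BitradeCond B W) :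
    ∃ (r₁ r₂ : R) (c₁ c₂ : C) (s₁ s₂ : S), r₁ ≠ r₂ ∧ c₁ ≠ c₂ ∧ s₁ ≠ s₂ ∧
      W = intercalate r₁ r₂ c₁ c₂ s₁ s₂ := by
  obtain ⟨r₁, r₂, c₁, c₂, c₃, s₁, s₂, s₃, s₄, hr, hc₂, hc₃, hs₂, hsub⟩ :=
    exists_four_subset_of_bitradeCond hne hWB hBW
  have hWeq := (Set.eq_of_subset_of_ncard_le hsub
    (by rw [h4, ncard_eq_four_of_ne hr hc₂ hc₃]) hW).symm
  subst hWeq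
  have hs₄ : s₄ = s₁ := by
    obtain ⟨r, c, hr', hc', hx⟩ :=
      exists_mem_same_symbol_of_bitradeCond hWB hBW (t := (r₁, c₁, s₁)) (by simp)
    simp only [Set.mem_insert_iff, Set.mem_singleton_iff, Prod.mk.injEq] at hx
    grind
  have hs₃ : s₃ = s₂ := by
    obtain ⟨r, c, hr', hc', hx⟩ :=
      exists_mem_same_symbol_of_bitradeCond hWB hBW (t := (r₂, c₁, s₃)) (by simp)
    simp only [Set.mem_insert_iff, Set.mem_singleton_iff, Prod.mk.injEq] at hx
    grind
  have hc₃₂ : c₃ = c₂ := by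
    obtain ⟨r, s, hr', hs', hx⟩ :=
      exists_mem_same_col_of_bitradeCond hWB hBW (t := (r₁, c₂, s₂)) (by simp)
    simp only [Set.mem_insert_iff, Set.mem_singleton_iff, Prod.mk.injEq] at hx
    grind
  exact ⟨r₁, r₂, c₁, c₂, s₁, s₂, hr, hc₂.symm, hs₂.symm, by rw [hs₄, hs₃, hc₃₂]; rfl⟩

lemma eq_intercalate_swap_of_bitradeCond {r₁ r₂ : R} {c₁ c₂ : C} {s₁ s₂ : S} (hr : r₁ ≠ r₂)
    (hc : c₁ ≠ c₂) (hWeq : W = intercalate r₁ r₂ c₁ c₂ s₁ s₂) (hdisj : Disjoint W B)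
    (hWB : BitradeCond W B) (hBW : BitradeCond B W) : B = intercalate r₁ r₂ c₁ c₂ s₂ s₁ := by
  subst hWeq
  apply Set.Subset.antisymm
  · rintro ⟨r, c, s⟩ hx
    have hxW := Set.disjoint_right.1 hdisj hx
    obtain ⟨⟨r', ⟨-, hrow⟩, -⟩, ⟨c', ⟨-, hcol⟩, -⟩, -⟩ := hBW _ hx
    simp only [intercalate, Set.mem_insert_iff, Set.mem_singleton_iff, Prod.mk.injEq]
      at hxW hrow hcol ⊢
    grind
  · simp only [intercalate, Set.insert_subset_iff, Set.singleton_subset_iff]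
    refine ⟨mem_of_bitradeCond_of_mem_col hWB hBW (s := s₁) ?_ ?_,
      mem_of_bitradeCond_of_mem_col hWB hBW (s := s₂) ?_ ?_,
      mem_of_bitradeCond_of_mem_col hWB hBW (s := s₂) ?_ ?_,
      mem_of_bitradeCond_of_mem_col hWB hBW (s := s₁) ?_ ?_⟩
    all_goals
      simp only [intercalate, Set.mem_insert_iff, Set.mem_singleton_iff, Prod.mk.injEq]
      grind

end

theorem stmt16_general {R C S : Type*} (W B : Set (R × C × S)) (hW : W.Finite)
    (h : IsLatinBitrade W B) :
    4 ≤ W.ncard ∧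
    (W.ncard = 4 →
      ∃ (r₁ r₂ : R) (c₁ c₂ : C) (s₁ s₂ : S), r₁ ≠ r₂ ∧ c₁ ≠ c₂ ∧ s₁ ≠ s₂ ∧
        W = {(r₁, c₁, s₁), (r₁, c₂, s₂), (r₂, c₁, s₂), (r₂, c₂, s₁)} ∧
        B = {(r₁, c₁, s₂), (r₁, c₂, s₁), (r₂, c₁, s₁), (r₂, c₂, s₂)}) := by
  obtain ⟨hne, -, hdisj, -, -, hWB, hBW⟩ := h
  refine ⟨four_le_ncard_of_bitradeCond hW hne hWB hBW, fun h4 => ?_⟩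
  obtain ⟨r₁, r₂, c₁, c₂, s₁, s₂, hr, hc, hs, hWeq⟩ :=
    exists_eq_intercalate_of_ncard_eq_four hW h4 hne hWB hBW
  exact ⟨r₁, r₂, c₁, c₂, s₁, s₂, hr, hc, hs, hWeq,
    eq_intercalate_swap_of_bitradeCond hr hc hWeq hdisj hWB hBW⟩

/-- Every latin bitrade has size at least 4, and a latin bitrade of size exactly 4 is an
intercalate. -/
theorem stmt16 {R C S : Type*} (W B : Set (R × C × S)) (hW : W.Finite) (hB : B.Finite)
    (h : IsLatinBitrade W B) :
    4 ≤ W.ncard ∧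
    (W.ncard = 4 →
      ∃ (r₁ r₂ : R) (c₁ c₂ : C) (s₁ s₂ : S), r₁ ≠ r₂ ∧ c₁ ≠ c₂ ∧ s₁ ≠ s₂ ∧
        W = {(r₁, c₁, s₁), (r₁, c₂, s₂), (r₂, c₁, s₂), (r₂, c₂, s₁)} ∧
        B = {(r₁, c₁, s₂), (r₁, c₂, s₁), (r₂, c₁, s₁), (r₂, c₂, s₂)}) :=
  stmt16_general W B hW h
end

section
/- The partial latin square W = {(r₀,c₀,0),(r₀,c₁,1),(r₀,c₂,2),(r₀,c₃,3),(r₁,c₀,1),(r₁,c₁,0),(r₂,c₀,2),(r₂,c₂,1),(r₃,c₁,3),(r₃,c₃,0)} (size 10) cannot be embedded in any cyclic group. Precisely: there is no integer m ≥ 1 and no injections R → ℤ_m, C → ℤ_m, S → ℤ_m sending rows, columns and symbols to elements of ℤ_m such that for every (r,c,s) ∈ W the images satisfy r + c = s in ℤ_m. -/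
/-!
In any abelian group the relations of `W17` give `2(s₁ - s₀) = 0`, `2(s₃ - s₂) = 0` and
`r₃ - r₂ = (s₃ - s₂) - (s₁ - s₀)`. A cyclic group has at most one element of order 2, so once
the symbols are embedded injectively, `s₁ - s₀ = s₃ - s₂` and hence `r₂ = r₃`.
-/

/-- The size-10 partial latin square of Example `noncyc`, with rows `r₀,…,r₃`,
columns `c₀,…,c₃` and symbols `0,…,3` (all indexed by `Fin 4`). -/
def W17 : Set (Fin 4 × Fin 4 × Fin 4) :=
  {(0, 0, 0), (0, 1, 1), (0, 2, 2), (0, 3, 3), (1, 0, 1),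
   (1, 1, 0), (2, 0, 2), (2, 2, 1), (3, 1, 3), (3, 3, 0)}

open Finset in
theorem IsAddCyclic.eq_of_two_nsmul_eq_zero {G : Type*} [AddCommGroup G] [IsAddCyclic G]
    [Finite G] {x y : G} (hx : 2 • x = 0) (hy : 2 • y = 0) (hx0 : x ≠ 0) (hy0 : y ≠ 0) :
    x = y := by
  classical
  have := Fintype.ofFinite G
  by_contra hxy
  have hsub : {0, x, y} ⊆ ({a : G | 2 • a = 0} : Finset G) := by
    simp [insert_subset_iff, hx, hy]
  have hcard : #({0, x, y} : Finset G) = 3 := by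
    rw [card_insert_of_notMem (by simp [hx0.symm, hy0.symm]), card_pair hxy]
  have := (card_le_card hsub).trans (IsAddCyclic.card_nsmul_eq_zero_le two_pos)
  omega

namespace W17

variable {G : Type*} [AddCommGroup G] {fr fc fs : Fin 4 → G}
  (h : ∀ t ∈ W17, fr t.1 + fc t.2.1 = fs t.2.2)
include h

theorem two_nsmul_fs_one_sub_fs_zero : 2 • (fs 1 - fs 0) = 0 := by
  linear_combination (norm := abel) h (0, 0, 0) (by simp [W17]) + h (1, 1, 0) (by simp [W17])
    - h (0, 1, 1) (by simp [W17]) - h (1, 0, 1) (by simp [W17])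

theorem two_nsmul_fs_three_sub_fs_two : 2 • (fs 3 - fs 2) = 0 := by
  linear_combination (norm := abel) h (0, 2, 2) (by simp [W17]) + h (0, 1, 1) (by simp [W17])
    + h (3, 3, 0) (by simp [W17]) + h (2, 0, 2) (by simp [W17])
    - h (0, 0, 0) (by simp [W17]) - h (0, 3, 3) (by simp [W17])
    - h (2, 2, 1) (by simp [W17]) - h (3, 1, 3) (by simp [W17])

theorem fr_three_sub_fr_two : fr 3 - fr 2 = (fs 3 - fs 2) - (fs 1 - fs 0) := by
  linear_combination (norm := abel) h (3, 1, 3) (by simp [W17]) + h (0, 0, 0) (by simp [W17])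
    - h (2, 0, 2) (by simp [W17]) - h (0, 1, 1) (by simp [W17])

end W17

/-- `W17` cannot be embedded in any cyclic group: there is no `m ≥ 1` and injections of the
rows, columns and symbols into `ℤ_m` such that `r + c = s` for every triple `(r,c,s) ∈ W17`. -/
theorem stmt17 :
    ¬ ∃ (m : ℕ), 1 ≤ m ∧ ∃ (fr fc fs : Fin 4 → ZMod m),
        Function.Injective fr ∧ Function.Injective fc ∧ Function.Injective fs ∧
        ∀ t ∈ W17, fr t.1 + fc t.2.1 = fs t.2.2 := by
  rintro ⟨m, hm, fr, fc, fs, hfr, -, hfs, h⟩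
  have : NeZero m := ⟨by omega⟩
  have hs10 : fs 1 - fs 0 ≠ 0 := sub_ne_zero.2 (hfs.ne (by decide))
  have hs32 : fs 3 - fs 2 ≠ 0 := sub_ne_zero.2 (hfs.ne (by decide))
  have hs : fs 3 - fs 2 = fs 1 - fs 0 := IsAddCyclic.eq_of_two_nsmul_eq_zero
    (W17.two_nsmul_fs_three_sub_fs_two h) (W17.two_nsmul_fs_one_sub_fs_zero h) hs32 hs10
  have hr : fr 3 = fr 2 := sub_eq_zero.1 (by rw [W17.fr_three_sub_fr_two h, hs, sub_self])
  exact absurd (hfr hr) (by decide)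
end

section
/- Let (W,B) be a connected latin bitrade with W embedded in a group G (so xy = z for all (x,y,z) ∈ W), and let φ: G → ℤ be a group homomorphism. Then W embeds in the kernel of φ. -/
open Set

section ImageEq

variable {α β N : Type*}

theorem finsum_mem_eq_finsum_mem_iff_of_le [AddCommMonoid N] [PartialOrder N]
    [IsOrderedCancelAddMonoid N] {s : Set α} (hs : s.Finite) {f g : α → N}
    (hfg : ∀ x ∈ s, f x ≤ g x) :
    ∑ᶠ x ∈ s, f x = ∑ᶠ x ∈ s, g x ↔ ∀ x ∈ s, f x = g x := by
  rw [finsum_mem_eq_finite_toFinset_sum _ hs, finsum_mem_eq_finite_toFinset_sum _ hs,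
    Finset.sum_eq_sum_iff_of_le (by simpa using hfg)]
  simp

variable {π : α → β} {s t : Set α}

theorem finsum_mem_inter_preimage_eq_of_image_eq [AddCommMonoid N] (hs : InjOn π s)
    (ht : InjOn π t) (hst : π '' s = π '' t) (Q : Set β) (f : β → N) :
    ∑ᶠ a ∈ s ∩ π ⁻¹' Q, f (π a) = ∑ᶠ a ∈ t ∩ π ⁻¹' Q, f (π a) := by
  rw [← finsum_mem_image (hs.mono inter_subset_left),
    ← finsum_mem_image (ht.mono inter_subset_left), image_inter_preimage, image_inter_preimage, hst]

theorem ncard_inter_preimage_eq_of_image_eq (hs : InjOn π s) (ht : InjOn π t)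
    (hst : π '' s = π '' t) (Q : Set β) : (s ∩ π ⁻¹' Q).ncard = (t ∩ π ⁻¹' Q).ncard := by
  rw [← (hs.mono inter_subset_left).ncard_image,
    ← (ht.mono inter_subset_left).ncard_image, image_inter_preimage,
    image_inter_preimage, hst]

end ImageEq

theorem Subgroup.exists_injOn_val_eq {α G : Type*} [Group G] (K : Subgroup G) {s : Set α}
    {u : α → G} (hu : InjOn u s) (hs : MapsTo u s K) :
    ∃ f : α → K, InjOn f s ∧ ∀ x ∈ s, (f x : G) = u x := by
  classical
  let f : α → K := fun x => if hx : u x ∈ K then ⟨u x, hx⟩ else 1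
  have hf : ∀ x ∈ s, (f x : G) = u x := fun x hx => by simp [f, show u x ∈ K from hs hx]
  exact ⟨f, fun x hx y hy hxy => hu hx hy (by rw [← hf x hx, ← hf y hy, hxy]), hf⟩

namespace LatinBitrade

variable {R C S : Type*}

def rowCol (t : R × C × S) : R × C := (t.1, t.2.1)

def rowSym (t : R × C × S) : R × S := (t.1, t.2.2)

def colSym (t : R × C × S) : C × S := (t.2.1, t.2.2)

def SharesTwoCoords (t t' : R × C × S) : Prop :=
  rowCol t = rowCol t' ∨ rowSym t = rowSym t' ∨ colSym t = colSym t'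

theorem SharesTwoCoords.symm {t t' : R × C × S} (h : SharesTwoCoords t t') :
    SharesTwoCoords t' t :=
  h.imp Eq.symm (Or.imp Eq.symm Eq.symm)

theorem SharesTwoCoords.eq_and_eq_of_add_eq {M : Type*} [AddCancelCommMonoid M] {α : R → M}
    {β : C → M} {t b : R × C × S} (hs : SharesTwoCoords t b)
    (hlev : α t.1 + β t.2.1 = α b.1 + β b.2.1) : α t.1 = α b.1 ∧ β t.2.1 = β b.2.1 := by
  rcases hs with hs | hs | hs
  · obtain ⟨hr, hc⟩ : t.1 = b.1 ∧ t.2.1 = b.2.1 := Prod.ext_iff.1 hs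
    rw [hr, hc]
    exact ⟨rfl, rfl⟩
  · obtain ⟨hr, -⟩ : t.1 = b.1 ∧ t.2.2 = b.2.2 := Prod.ext_iff.1 hs
    rw [hr] at hlev ⊢
    exact ⟨rfl, add_left_cancel hlev⟩
  · obtain ⟨hc, -⟩ : t.2.1 = b.2.1 ∧ t.2.2 = b.2.2 := Prod.ext_iff.1 hs
    rw [hc] at hlev ⊢
    exact ⟨add_right_cancel hlev, rfl⟩

variable {P W B U : Set (R × C × S)}

theorem _root_.IsPLS.injOn_rowCol (h : IsPLS P) : InjOn rowCol P :=
  fun t₁ h₁ t₂ h₂ he => (h t₁ h₁ t₂ h₂).1 (Prod.ext_iff.1 he)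

theorem _root_.IsPLS.injOn_rowSym (h : IsPLS P) : InjOn rowSym P :=
  fun t₁ h₁ t₂ h₂ he => (h t₁ h₁ t₂ h₂).2.1 (Prod.ext_iff.1 he)

theorem _root_.IsPLS.injOn_colSym (h : IsPLS P) : InjOn colSym P :=
  fun t₁ h₁ t₂ h₂ he => (h t₁ h₁ t₂ h₂).2.2 (Prod.ext_iff.1 he)

theorem _root_.BitradeCond.rowCol_image_subset (h : BitradeCond W B) :
    rowCol '' W ⊆ rowCol '' B := by
  rintro _ ⟨t, ht, rfl⟩
  obtain ⟨s', ⟨-, hs'⟩, -⟩ := (h t ht).2.2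
  exact ⟨_, hs', rfl⟩

theorem _root_.BitradeCond.rowSym_image_subset (h : BitradeCond W B) :
    rowSym '' W ⊆ rowSym '' B := by
  rintro _ ⟨t, ht, rfl⟩
  obtain ⟨c', ⟨-, hc'⟩, -⟩ := (h t ht).2.1
  exact ⟨_, hc', rfl⟩

theorem _root_.BitradeCond.colSym_image_subset (h : BitradeCond W B) :
    colSym '' W ⊆ colSym '' B := by
  rintro _ ⟨t, ht, rfl⟩
  obtain ⟨r', ⟨-, hr'⟩, -⟩ := (h t ht).1
  exact ⟨_, hr', rfl⟩

theorem _root_.BitradeCond.inter (h : BitradeCond W B)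
    (hU : ∀ t ∈ W, ∀ b ∈ B, SharesTwoCoords t b → (t ∈ U ↔ b ∈ U)) :
    BitradeCond (W ∩ U) (B ∩ U) := by
  intro t ⟨ht, htU⟩
  obtain ⟨⟨r', hr', hr'u⟩, ⟨c', hc', hc'u⟩, ⟨s', hs', hs'u⟩⟩ := h t ht
  refine ⟨⟨r', ⟨hr'.1, hr'.2, ?_⟩, fun y hy => hr'u y ⟨hy.1, hy.2.1⟩⟩,
    ⟨c', ⟨hc'.1, hc'.2, ?_⟩, fun y hy => hc'u y ⟨hy.1, hy.2.1⟩⟩,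
    ⟨s', ⟨hs'.1, hs'.2, ?_⟩, fun y hy => hs'u y ⟨hy.1, hy.2.1⟩⟩⟩
  · exact (hU t ht _ hr'.2 (Or.inr (Or.inr rfl))).1 htU
  · exact (hU t ht _ hc'.2 (Or.inr (Or.inl rfl))).1 htU
  · exact (hU t ht _ hs'.2 (Or.inl rfl)).1 htU

end LatinBitrade

namespace IsLatinBitrade

open LatinBitrade

variable {R C S : Type*} {W B U : Set (R × C × S)}

theorem isPLS_left (h : IsLatinBitrade W B) : IsPLS W := h.2.2.2.1

theorem isPLS_right (h : IsLatinBitrade W B) : IsPLS B := h.2.2.2.2.1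

theorem bitradeCond_left (h : IsLatinBitrade W B) : BitradeCond W B := h.2.2.2.2.2.1

theorem bitradeCond_right (h : IsLatinBitrade W B) : BitradeCond B W := h.2.2.2.2.2.2

theorem rowCol_image_eq (h : IsLatinBitrade W B) : rowCol '' W = rowCol '' B :=
  h.bitradeCond_left.rowCol_image_subset.antisymm h.bitradeCond_right.rowCol_image_subset

theorem rowSym_image_eq (h : IsLatinBitrade W B) : rowSym '' W = rowSym '' B :=
  h.bitradeCond_left.rowSym_image_subset.antisymm h.bitradeCond_right.rowSym_image_subset

theorem colSym_image_eq (h : IsLatinBitrade W B) : colSym '' W = colSym '' B :=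
  h.bitradeCond_left.colSym_image_subset.antisymm h.bitradeCond_right.colSym_image_subset

theorem finite_right (h : IsLatinBitrade W B) (hW : W.Finite) : B.Finite :=
  Finite.of_finite_image (h.rowCol_image_eq ▸ hW.image rowCol) h.isPLS_right.injOn_rowCol

theorem inter (h : IsLatinBitrade W B)
    (hU : ∀ t ∈ W, ∀ b ∈ B, SharesTwoCoords t b → (t ∈ U ↔ b ∈ U))
    (hne : (W ∩ U).Nonempty) : IsLatinBitrade (W ∩ U) (B ∩ U) := by
  obtain ⟨-, -, hdisj, hWP, hBP, hWB, hBW⟩ := h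
  have hUsymm : ∀ b ∈ B, ∀ t ∈ W, SharesTwoCoords b t → (b ∈ U ↔ t ∈ U) :=
    fun b hb t ht hs => (hU t ht b hb hs.symm).symm
  have hBne : (B ∩ U).Nonempty := by
    obtain ⟨t, ht, htU⟩ := hne
    obtain ⟨s', ⟨-, hs'⟩, -⟩ := (hWB t ht).2.2
    exact ⟨_, hs', (hU t ht _ hs' (Or.inl rfl)).1 htU⟩
  exact ⟨hne, hBne, hdisj.mono inter_subset_left inter_subset_left,
    fun t₁ h₁ t₂ h₂ => hWP t₁ h₁.1 t₂ h₂.1, fun t₁ h₁ t₂ h₂ => hBP t₁ h₁.1 t₂ h₂.1,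
    hWB.inter hU, hBW.inter hUsymm⟩

theorem union_subset_of_forall_iff (h : IsLatinBitrade W B) (hconn : ConnectedBitrade W B)
    (hU : ∀ t ∈ W, ∀ b ∈ B, SharesTwoCoords t b → (t ∈ U ↔ b ∈ U))
    (hne : (W ∩ U).Nonempty) : W ∪ B ⊆ U := by
  have hWU : W ⊆ U := by
    by_contra hWU
    obtain ⟨t, ht, htU⟩ := not_subset.1 hWU
    have hUc : ∀ t ∈ W, ∀ b ∈ B, SharesTwoCoords t b → (t ∈ Uᶜ ↔ b ∈ Uᶜ) :=
      fun t ht b hb hs => not_congr (hU t ht b hb hs)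
    refine hconn ⟨W ∩ U, W ∩ Uᶜ, B ∩ U, B ∩ Uᶜ, h.inter hU hne, h.inter hUc ⟨t, ht, htU⟩,
      ?_, (inter_union_compl W U).symm, (inter_union_compl B U).symm⟩
    rw [inter_inter_inter_comm, inter_compl_self, inter_empty]
  refine union_subset hWU fun b hb => ?_
  obtain ⟨s', ⟨-, hs'⟩, -⟩ := (h.bitradeCond_right b hb).2.2
  exact (hU _ hs' b hb (Or.inl rfl)).1 (hWU hs')

section Labelling

variable {M : Type*} {α : R → M} {β : C → M} {γ : S → M} {m : M}

theorem add_le_of_forall_le [Add M] [Preorder M] (h : IsLatinBitrade W B)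
    (hW : ∀ t ∈ W, α t.1 + β t.2.1 = γ t.2.2) (hm : ∀ t ∈ W, γ t.2.2 ≤ m) {b}
    (hb : b ∈ B) : α b.1 + β b.2.1 ≤ m := by
  obtain ⟨s', ⟨-, hs'⟩, -⟩ := (h.bitradeCond_right b hb).2.2
  exact (hW _ hs').trans_le (hm _ hs')

variable [AddCommGroup M] [LinearOrder M] [IsOrderedAddMonoid M]

theorem add_eq_of_sym_eq (h : IsLatinBitrade W B) (hfin : W.Finite)
    (hW : ∀ t ∈ W, α t.1 + β t.2.1 = γ t.2.2) (hm : ∀ t ∈ W, γ t.2.2 ≤ m) {b}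
    (hb : b ∈ B) (hbm : γ b.2.2 = m) : α b.1 + β b.2.1 = m := by
  set s := b.2.2
  have hWs : (W ∩ {t | t.2.2 = s}).Finite := hfin.subset inter_subset_left
  have hBs : (B ∩ {t | t.2.2 = s}).Finite := (h.finite_right hfin).subset inter_subset_left
  have hrow : ∑ᶠ t ∈ B ∩ {t | t.2.2 = s}, α t.1 = ∑ᶠ t ∈ W ∩ {t | t.2.2 = s}, α t.1 :=
    (finsum_mem_inter_preimage_eq_of_image_eq h.isPLS_right.injOn_rowSym
      h.isPLS_left.injOn_rowSym h.rowSym_image_eq.symm {p | p.2 = s} fun p => α p.1 :)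
  have hcol : ∑ᶠ t ∈ B ∩ {t | t.2.2 = s}, β t.2.1 = ∑ᶠ t ∈ W ∩ {t | t.2.2 = s}, β t.2.1 :=
    (finsum_mem_inter_preimage_eq_of_image_eq h.isPLS_right.injOn_colSym
      h.isPLS_left.injOn_colSym h.colSym_image_eq.symm {p | p.2 = s} fun p => β p.1 :)
  have hsym : ∑ᶠ t ∈ W ∩ {t | t.2.2 = s}, γ t.2.2 = ∑ᶠ t ∈ B ∩ {t | t.2.2 = s}, γ t.2.2 :=
    (finsum_mem_inter_preimage_eq_of_image_eq h.isPLS_left.injOn_rowSym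
      h.isPLS_right.injOn_rowSym h.rowSym_image_eq {p | p.2 = s} fun p => γ p.2 :)
  have hsum : ∑ᶠ t ∈ B ∩ {t | t.2.2 = s}, (α t.1 + β t.2.1)
      = ∑ᶠ t ∈ B ∩ {t | t.2.2 = s}, γ t.2.2 := by
    rw [finsum_mem_add_distrib hBs, hrow, hcol, ← finsum_mem_add_distrib hWs, ← hsym]
    exact finsum_mem_congr rfl fun t ht => hW t ht.1
  refine ((finsum_mem_eq_finsum_mem_iff_of_le hBs ?_).1 hsum b ⟨hb, rfl⟩).trans hbm
  rintro t ⟨ht, hts⟩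
  rw [hts, hbm]
  exact h.add_le_of_forall_le hW hm ht

theorem sym_eq_of_add_eq (h : IsLatinBitrade W B) (hfin : W.Finite)
    (hW : ∀ t ∈ W, α t.1 + β t.2.1 = γ t.2.2) (hm : ∀ t ∈ W, γ t.2.2 ≤ m) {b}
    (hb : b ∈ B) (hbm : α b.1 + β b.2.1 = m) : γ b.2.2 = m := by
  have hsub : B ∩ {t | γ t.2.2 = m} ⊆ B ∩ {t | α t.1 + β t.2.1 = m} :=
    fun t ht => ⟨ht.1, h.add_eq_of_sym_eq hfin hW hm ht.1 ht.2⟩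
  have hWlev : W ∩ {t | α t.1 + β t.2.1 = m} = W ∩ {t | γ t.2.2 = m} := by
    ext t
    exact and_congr_right fun ht => show α t.1 + β t.2.1 = m ↔ γ t.2.2 = m by rw [hW t ht]
  have hcard : (B ∩ {t | α t.1 + β t.2.1 = m}).ncard = (B ∩ {t | γ t.2.2 = m}).ncard := by
    calc (B ∩ {t | α t.1 + β t.2.1 = m}).ncard
        = (W ∩ {t | α t.1 + β t.2.1 = m}).ncard :=
          ncard_inter_preimage_eq_of_image_eq h.isPLS_right.injOn_rowCol
            h.isPLS_left.injOn_rowCol h.rowCol_image_eq.symm {p | α p.1 + β p.2 = m}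
      _ = (W ∩ {t | γ t.2.2 = m}).ncard := by rw [hWlev]
      _ = (B ∩ {t | γ t.2.2 = m}).ncard :=
          ncard_inter_preimage_eq_of_image_eq h.isPLS_left.injOn_rowSym
            h.isPLS_right.injOn_rowSym h.rowSym_image_eq {p | γ p.2 = m}
  have hBlev : (B ∩ {t | α t.1 + β t.2.1 = m}).Finite :=
    (h.finite_right hfin).subset inter_subset_left
  have hmem : b ∈ B ∩ {t | γ t.2.2 = m} := by
    rw [eq_of_subset_of_ncard_le hsub hcard.le hBlev]
    exact ⟨hb, hbm⟩
  exact hmem.2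

theorem add_eq_of_forall_le (h : IsLatinBitrade W B) (hconn : ConnectedBitrade W B)
    (hfin : W.Finite) (hW : ∀ t ∈ W, α t.1 + β t.2.1 = γ t.2.2) {t₀} (ht₀ : t₀ ∈ W)
    (hm : ∀ t ∈ W, γ t.2.2 ≤ γ t₀.2.2) : ∀ t ∈ W ∪ B, α t.1 + β t.2.1 = γ t₀.2.2 := by
  set m := γ t₀.2.2
  let U : Set (R × C × S) := {t | α t.1 + β t.2.1 = m ∧ γ t.2.2 = m}
  have hUW : ∀ t ∈ W, (t ∈ U ↔ α t.1 + β t.2.1 = m) ∧ (t ∈ U ↔ γ t.2.2 = m) := fun t ht =>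
    ⟨⟨And.left, fun hl => ⟨hl, hW t ht ▸ hl⟩⟩, ⟨And.right, fun hs => ⟨hW t ht ▸ hs, hs⟩⟩⟩
  have hUB : ∀ b ∈ B, (b ∈ U ↔ α b.1 + β b.2.1 = m) ∧ (b ∈ U ↔ γ b.2.2 = m) := fun b hb =>
    ⟨⟨And.left, fun hl => ⟨hl, h.sym_eq_of_add_eq hfin hW hm hb hl⟩⟩,
      ⟨And.right, fun hs => ⟨h.add_eq_of_sym_eq hfin hW hm hb hs, hs⟩⟩⟩
  have hU : ∀ t ∈ W, ∀ b ∈ B, SharesTwoCoords t b → (t ∈ U ↔ b ∈ U) := by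
    intro t ht b hb hs
    rcases hs with hs | hs | hs
    · obtain ⟨hr, hc⟩ : t.1 = b.1 ∧ t.2.1 = b.2.1 := Prod.ext_iff.1 hs
      rw [(hUW t ht).1, (hUB b hb).1, hr, hc]
    · obtain ⟨-, hs⟩ : t.1 = b.1 ∧ t.2.2 = b.2.2 := Prod.ext_iff.1 hs
      rw [(hUW t ht).2, (hUB b hb).2, hs]
    · obtain ⟨-, hs⟩ : t.2.1 = b.2.1 ∧ t.2.2 = b.2.2 := Prod.ext_iff.1 hs
      rw [(hUW t ht).2, (hUB b hb).2, hs]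
  intro t ht
  exact (h.union_subset_of_forall_iff hconn hU ⟨t₀, ht₀, hW t₀ ht₀, rfl⟩ ht).1

theorem exists_forall_eq_of_add_eq (h : IsLatinBitrade W B) (hconn : ConnectedBitrade W B)
    (hfin : W.Finite) (hW : ∀ t ∈ W, α t.1 + β t.2.1 = γ t.2.2) :
    ∃ t₀ ∈ W, ∀ t ∈ W, α t.1 = α t₀.1 ∧ β t.2.1 = β t₀.2.1 := by
  obtain ⟨t₀, ht₀, hm⟩ := exists_max_image W (fun t => γ t.2.2) hfin h.1
  have hlev := h.add_eq_of_forall_le hconn hfin hW ht₀ hm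
  let U : Set (R × C × S) := {t | α t.1 = α t₀.1 ∧ β t.2.1 = β t₀.2.1}
  have hU : ∀ t ∈ W, ∀ b ∈ B, SharesTwoCoords t b → (t ∈ U ↔ b ∈ U) := by
    intro t ht b hb hs
    obtain ⟨hr, hc⟩ :=
      hs.eq_and_eq_of_add_eq ((hlev t (Or.inl ht)).trans (hlev b (Or.inr hb)).symm)
    change _ ∧ _ ↔ _ ∧ _
    rw [hr, hc]
  exact ⟨t₀, ht₀, fun t ht => h.union_subset_of_forall_iff hconn hU ⟨t₀, ht₀, rfl, rfl⟩
    (Or.inl ht)⟩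

end Labelling

end IsLatinBitrade

/-- If `(W,B)` is a connected latin bitrade with `W` embedded in a group `G` (so `xy = z` for
every `(x,y,z) ∈ W`) and `φ : G → ℤ` is a homomorphism, then `W` embeds in the kernel of `φ`:
there are maps of the rows, columns and symbols of `W` into `ker φ`, injective on the rows,
columns and symbols used by `W`, carrying every triple of `W` to a triple `(x',y',z')` of
`ker φ` with `x'y' = z'`. -/
theorem stmt18 {G : Type*} [Group G] (W B : Set (G × G × G)) (hfin : W.Finite)
    (h : IsLatinBitrade W B) (hconn : ConnectedBitrade W B)
    (hemb : ∀ t ∈ W, (t : G × G × G).1 * t.2.1 = t.2.2)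
    (φ : G →* Multiplicative ℤ) :
    ∃ f g h : G → φ.ker,
      Set.InjOn f {x | ∃ y z, (x, y, z) ∈ W} ∧
      Set.InjOn g {y | ∃ x z, (x, y, z) ∈ W} ∧
      Set.InjOn h {z | ∃ x y, (x, y, z) ∈ W} ∧
      ∀ t ∈ W, f (t : G × G × G).1 * g t.2.1 = h t.2.2 := by
  let ψ : G → ℤ := fun x => (φ x).toAdd
  have hψ : ∀ x y, ψ (x * y) = ψ x + ψ y := fun x y => by simp [ψ]
  have hψinv : ∀ x, ψ x⁻¹ = -ψ x := fun x => by simp [ψ]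
  have hker : ∀ x, ψ x = 0 → x ∈ φ.ker := fun x hx => φ.mem_ker.2 (toAdd_eq_zero.1 hx)
  have hW : ∀ t ∈ W, ψ t.1 + ψ t.2.1 = ψ t.2.2 := fun t ht => by rw [← hψ, hemb t ht]
  obtain ⟨⟨x₀, y₀, z₀⟩, ht₀, hconst⟩ := h.exists_forall_eq_of_add_eq hconn hfin hW
  have hz₀ := hW _ ht₀
  obtain ⟨f, hf, hfv⟩ := φ.ker.exists_injOn_val_eq (u := fun x => z₀⁻¹ * x * y₀)
    ((mul_left_injective y₀).comp (mul_right_injective z₀⁻¹)).injOn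
    (s := {x | ∃ y z, (x, y, z) ∈ W}) fun x ⟨y, z, hx⟩ => hker _ <| by
      simp only [hψ, hψinv, ← hz₀, (hconst _ hx).1]; ring
  obtain ⟨g, hg, hgv⟩ := φ.ker.exists_injOn_val_eq (u := fun y => y₀⁻¹ * y)
    (mul_right_injective y₀⁻¹).injOn
    (s := {y | ∃ x z, (x, y, z) ∈ W}) fun y ⟨x, z, hy⟩ => hker _ <| by
      simp only [hψ, hψinv, (hconst _ hy).2]; ring
  obtain ⟨k, hk, hkv⟩ := φ.ker.exists_injOn_val_eq (u := fun z => z₀⁻¹ * z)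
    (mul_right_injective z₀⁻¹).injOn
    (s := {z | ∃ x y, (x, y, z) ∈ W}) fun z ⟨x, y, hz⟩ => hker _ <| by
      simp only [hψ, hψinv, ← hz₀, ← hW _ hz, (hconst _ hz).1, (hconst _ hz).2]; ring
  refine ⟨f, g, k, hf, hg, hk, fun t ht => Subtype.ext ?_⟩
  rw [Subgroup.coe_mul, hfv _ ⟨_, _, ht⟩, hgv _ ⟨_, _, ht⟩, hkv _ ⟨_, _, ht⟩, ← hemb t ht]
  group
end
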